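/- Let (G,φ) be an ordered graph with at least one vertex. Then the number of maximal edges of (G,φ) is at most |V(G)| − 1. -/

import Mathlib

/-- In the ordered graph `(G, φ)`, the edge `uv` (with `φ u < φ v`) is maximal:
there is no other edge `u'v'` of `G` with `φ u' ≤ φ u` and `φ v ≤ φ v'`. -/
def MaxEdge {V : Type*} (G : SimpleGraph V) (φ : V → ℝ) (u v : V) : Prop :=
  G.Adj u v ∧ φ u < φ v ∧
    ¬ ∃ u' v', G.Adj u' v' ∧ φ u' ≤ φ u ∧ φ v ≤ φ v' ∧ ¬(u' = u ∧ v' = v)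

/-! Distinct maximal edges have distinct right endpoints, and no right endpoint is a
`φ`-minimal vertex; so the right endpoint embeds the maximal edges into the other
`|V(G)| - 1` vertices. -/

namespace MaxEdge

variable {V : Type*} {G : SimpleGraph V} {φ : V → ℝ}

theorem fst_eq_of_snd_eq {u u' v : V} (h : MaxEdge G φ u v) (h' : MaxEdge G φ u' v) :
    u = u' := by
  by_contra hne
  rcases le_total (φ u) (φ u') with hle | hle
  · exact h'.2.2 ⟨u, v, h.1, hle, le_rfl, fun huv => hne huv.1⟩
  · exact h.2.2 ⟨u', v, h'.1, hle, le_rfl, fun huv => hne huv.1.symm⟩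

theorem injOn_snd : Set.InjOn Prod.snd {p : V × V | MaxEdge G φ p.1 p.2} := by
  rintro ⟨u, v⟩ h ⟨u', v'⟩ h' (rfl : v = v')
  exact congrArg (·, v) (fst_eq_of_snd_eq h h')

theorem snd_ne_of_forall_le {u v w : V} (h : MaxEdge G φ u v) (hw : ∀ x, φ w ≤ φ x) :
    v ≠ w := by
  rintro rfl
  exact (hw u).not_gt h.2.1

end MaxEdge

theorem card_maxEdges_le
    {V : Type*} [Fintype V] [Nonempty V] (G : SimpleGraph V) (φ : V → ℝ) :
    Set.ncard {p : V × V | MaxEdge G φ p.1 p.2} ≤ Fintype.card V - 1 := by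
  obtain ⟨w, hw⟩ := Finite.exists_min φ
  calc _ ≤ ({w}ᶜ : Set V).ncard :=
        Set.ncard_le_ncard_of_injOn Prod.snd (fun p hp => hp.snd_ne_of_forall_le hw)
          MaxEdge.injOn_snd
    _ = Fintype.card V - 1 := by
      rw [Set.ncard_compl, Set.ncard_singleton, Nat.card_eq_fintype_card]
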